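/- arXiv:2102.00338 — 2 statements merged into one kernel-verified Lean document; each statement's English description precedes it below -/
import Mathlib

section
/- In any comparison-based algorithm that correctly determines the minimum of $n$ distinct elements, the element returned as the minimum must have participated in at least $\lceil \log_2 n \rceil$ comparisons. Consequently, for a sequence consisting of $\lfloor\sqrt{k}\rfloor$ elements in arbitrary order followed by $n - \lfloor\sqrt{k}\rfloor$ larger elements in sorted order (which has at most $k$ inversions), the fragile complexity of finding the minimum is at least $\log_2 \lfloor\sqrt{k}\rfloor = \Omega(\log k)$. -/
/-!
Adversary argument. The adversary keeps a set of candidates for the minimum, all lying below every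
other element, each candidate carrying a weight: the number of original candidates it stands for.
When two candidates are compared, the lighter one loses and is moved just above the remaining
candidates, and the winner absorbs its weight; so the weight of a candidate at most doubles in each
comparison it takes part in. All other comparisons are answered by the current values, which the
adversary never changes outside the candidate set. At a leaf, reordering the surviving candidates
does not change the run, so a correct algorithm must have reached a single surviving candidate,
namely the returned minimum; it carries the whole weight, the number `#D` of initial candidates,
hence took part in at least `log₂ #D` comparisons. Started from the sorted input with the first
`⌊√k⌋` elements as candidates, the adversary only reorders those, so the final input has at most
`⌊√k⌋² ≤ k` inversions.
-/

/-- A deterministic comparison-based algorithm on `n` elements, modeled as a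
binary decision tree: each internal node compares elements at indices `i`, `j`
and branches on the outcome; each leaf returns an answer index. -/
inductive CompTree (n : ℕ) where
  | leaf (ans : Fin n) : CompTree n
  | node (i j : Fin n) (l r : CompTree n) : CompTree n

/-- Running a comparison tree on input `a` returns the answer together with the
multiset of element indices that participated in comparisons (with
multiplicity, so `(run a T).2.count x` is the number of comparisons `x`
participated in). -/
noncomputable def CompTree.run {n : ℕ} (a : Fin n → ℝ) :
    CompTree n → Fin n × Multiset (Fin n)
  | .leaf ans => (ans, 0)
  | .node i j l r =>
      let res := if a i < a j then l.run a else r.run a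
      (res.1, i ::ₘ j ::ₘ res.2)

open Finset Function

theorem Function.injective_update_of_ne {α β : Type*} [DecidableEq α] {f : α → β}
    (hf : Injective f) {z : α} {t : β} (ht : ∀ x ≠ z, f x ≠ t) : Injective (update f z t) := by
  intro x y hxy
  by_cases hx : x = z <;> by_cases hy : y = z
  · rw [hx, hy]
  · rw [hx, update_self, update_of_ne hy] at hxy
    exact absurd hxy.symm (ht y hy)
  · rw [hy, update_self, update_of_ne hx] at hxy
    exact absurd hxy (ht x hx)
  · rw [update_of_ne hx, update_of_ne hy] at hxy
    exact hf hxy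

theorem Real.logb_natCast_le_clog (b m : ℕ) : Real.logb b m ≤ Nat.clog b m :=
  Real.natCeil_logb_natCast b m ▸ Nat.le_ceil _

namespace CompTree

variable {n : ℕ}

theorem run_node (a : Fin n → ℝ) (i j : Fin n) (l r : CompTree n) :
    (node i j l r).run a =
      (((if a i < a j then l else r).run a).1,
        i ::ₘ j ::ₘ ((if a i < a j then l else r).run a).2) := by
  simp only [run]
  split_ifs <;> rfl

namespace MinAdversary

def AgreeOff (C : Finset (Fin n)) (a b : Fin n → ℝ) : Prop :=
  ∀ x y, ¬(x ∈ C ∧ y ∈ C) → (a x < a y ↔ b x < b y)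

def BelowCompl (C : Finset (Fin n)) (a : Fin n → ℝ) : Prop :=
  ∀ x ∈ C, ∀ y ∉ C, a x < a y

namespace AgreeOff

variable {C C' : Finset (Fin n)} {a b c : Fin n → ℝ}

@[refl] theorem refl (C : Finset (Fin n)) (a : Fin n → ℝ) : AgreeOff C a a :=
  fun _ _ _ => Iff.rfl

theorem trans (hab : AgreeOff C a b) (hbc : AgreeOff C b c) : AgreeOff C a c :=
  fun x y h => (hab x y h).trans (hbc x y h)

theorem mono (h : AgreeOff C' a b) (hC : C' ⊆ C) : AgreeOff C a b :=
  fun x y hxy => h x y fun hC' => hxy ⟨hC hC'.1, hC hC'.2⟩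

end AgreeOff

theorem agreeOff_update {C : Finset (Fin n)} {a : Fin n → ℝ}
    (hC : BelowCompl C a) {z : Fin n} (hz : z ∈ C) {t : ℝ} (ht : ∀ y ∉ C, t < a y) :
    AgreeOff C a (update a z t) := by
  intro x y hxy
  by_cases hx : x = z
  · subst hx
    have hy : y ∉ C := fun hy => hxy ⟨hz, hy⟩
    have hyx : y ≠ x := fun h => hy (h ▸ hz)
    simp only [update_self, update_of_ne hyx]
    exact iff_of_true (hC x hz y hy) (ht y hy)
  by_cases hy : y = z
  · subst hy
    have hx' : x ∉ C := fun hx' => hxy ⟨hx', hz⟩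
    simp only [update_self, update_of_ne hx]
    exact iff_of_false (hC y hz x hx').not_gt (ht x hx').not_gt
  · simp only [update_of_ne hx, update_of_ne hy]

/-- The adversary's bookkeeping: the candidates for the minimum, the weight of each candidate
(the number of initial candidates it has absorbed) and the input values committed so far. -/
structure State (n : ℕ) where
  cand : Finset (Fin n)
  wt : Fin n → ℕ
  val : Fin n → ℝ

namespace State

structure Valid (s : State n) : Prop where
  injective : Injective s.val
  belowCompl : BelowCompl s.cand s.val

structure Reaches (s t : State n) : Prop where
  subset : t.cand ⊆ s.cand
  agreeOff : AgreeOff s.cand s.val t.val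
  sum_wt : ∑ x ∈ t.cand, t.wt x = ∑ x ∈ s.cand, s.wt x

@[refl] theorem Reaches.refl (s : State n) : s.Reaches s :=
  ⟨subset_rfl, .refl _ _, rfl⟩

theorem Reaches.trans {s t u : State n} (hst : s.Reaches t) (htu : t.Reaches u) : s.Reaches u :=
  ⟨htu.subset.trans hst.subset, hst.agreeOff.trans (htu.agreeOff.mono hst.subset),
    htu.sum_wt.trans hst.sum_wt⟩

/-- `t` is a state in which the adversary has answered every comparison of `T` starting from `s`. -/
structure Resolves (T : CompTree n) (s t : State n) : Prop where
  valid : t.Valid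
  reaches : s.Reaches t
  run_eq : ∀ b, AgreeOff t.cand t.val b → T.run b = T.run t.val
  wt_le : ∀ w ∈ t.cand, t.wt w ≤ s.wt w * 2 ^ (T.run t.val).2.count w

theorem exists_eliminate {s : State n} (hs : s.Valid) {q : Fin n} (hq : q ∈ s.cand) :
    ∃ a : Fin n → ℝ, Injective a ∧ BelowCompl (s.cand.erase q) a ∧ AgreeOff s.cand s.val a := by
  obtain ⟨t, hlo, hhi⟩ := Order.exists_between_finsets ((s.cand.erase q).image s.val)
    (s.candᶜ.image s.val) (by
      simp only [mem_image, mem_erase, mem_compl]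
      rintro _ ⟨x, ⟨-, hx⟩, rfl⟩ _ ⟨y, hy, rfl⟩
      exact hs.belowCompl x hx y hy)
  replace hlo : ∀ x ≠ q, x ∈ s.cand → s.val x < t := fun x hxq hx =>
    hlo _ (mem_image_of_mem _ (mem_erase.mpr ⟨hxq, hx⟩))
  replace hhi : ∀ y ∉ s.cand, t < s.val y := fun y hy =>
    hhi _ (mem_image_of_mem _ (mem_compl.mpr hy))
  refine ⟨update s.val q t, injective_update_of_ne hs.injective fun x hx => ?_, ?_,
    agreeOff_update hs.belowCompl hq hhi⟩
  · by_cases hxC : x ∈ s.cand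
    exacts [(hlo x hx hxC).ne, (hhi x hxC).ne']
  · intro x hx y hy
    obtain ⟨hxq, hxC⟩ := mem_erase.mp hx
    rw [update_of_ne hxq]
    by_cases hyq : y = q
    · rw [hyq, update_self]
      exact hlo x hxq hxC
    · rw [update_of_ne hyq]
      exact hs.belowCompl x hxC y fun hyC => hy (mem_erase.mpr ⟨hyq, hyC⟩)

theorem exists_respond {s : State n} (hs : s.Valid) (i j : Fin n) :
    ∃ t : State n, t.Valid ∧ s.Reaches t ∧ (i = j ∨ ¬(i ∈ t.cand ∧ j ∈ t.cand)) ∧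
      ∀ w ∈ t.cand, t.wt w ≤ s.wt w * 2 ^ ({i, j} : Multiset (Fin n)).count w := by
  by_cases hcand : i ≠ j ∧ i ∈ s.cand ∧ j ∈ s.cand
  swap
  · refine ⟨s, hs, .refl s, by tauto, fun w _ => Nat.le_mul_of_pos_right _ (by positivity)⟩
  obtain ⟨hij, hi, hj⟩ := hcand
  wlog hwt : s.wt j ≤ s.wt i generalizing i j
  · obtain ⟨t, ht, hst, hdec, hwt⟩ := this j i hij.symm hj hi (by omega)
    exact ⟨t, ht, hst, by tauto, by rwa [Multiset.pair_comm]⟩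
  obtain ⟨a, ha, haC, hsa⟩ := exists_eliminate hs hj
  refine ⟨⟨s.cand.erase j, s.wt + Pi.single i (s.wt j), a⟩, ⟨ha, haC⟩,
    ⟨erase_subset _ _, hsa, ?_⟩, .inr fun h => (mem_erase.mp h.2).1 rfl, fun w hw => ?_⟩
  · simp [sum_add_distrib, sum_pi_single', hij, hi, sum_erase_add _ _ hj]
  · change s.wt w + (Pi.single i (s.wt j) : Fin n → ℕ) w ≤ _
    by_cases hwi : w = i
    · subst hwi
      have hcount : ({w, j} : Multiset (Fin n)).count w = 1 := by simp [hij]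
      rw [hcount, Pi.single_eq_same]
      omega
    · rw [Pi.single_eq_of_ne hwi, add_zero]
      exact Nat.le_mul_of_pos_right _ (by positivity)

theorem exists_resolves (T : CompTree n) {s : State n} (hs : s.Valid) :
    ∃ t, Resolves T s t := by
  induction T generalizing s with
  | leaf ans => exact ⟨s, hs, .refl s, fun _ _ => rfl, fun w _ => by simp [run]⟩
  | node i j l r ihl ihr =>
    obtain ⟨s₁, hs₁, hss₁, hij, hwt₁⟩ := exists_respond hs i j
    obtain ⟨t, ht⟩ : ∃ t, Resolves (if s₁.val i < s₁.val j then l else r) s₁ t := by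
      split_ifs
      exacts [ihl hs₁, ihr hs₁]
    have hbranch (b) (hb : AgreeOff t.cand t.val b) : b i < b j ↔ s₁.val i < s₁.val j := by
      rcases hij with rfl | hij
      · simp
      · exact ((ht.reaches.agreeOff.trans (hb.mono ht.reaches.subset)) i j hij).symm
    refine ⟨t, ht.valid, hss₁.trans ht.reaches, fun b hb => ?_, fun w hw => ?_⟩
    · simp only [run_node, hbranch b hb, hbranch t.val (.refl _ _), ht.run_eq b hb]
    · simp only [run_node, hbranch t.val (.refl _ _)]
      calc t.wt w ≤ s₁.wt w * 2 ^ _ := ht.wt_le w hw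
        _ ≤ s.wt w * 2 ^ ({i, j} : Multiset (Fin n)).count w * 2 ^ _ :=
          Nat.mul_le_mul_right _ (hwt₁ w (ht.reaches.subset hw))
        _ = _ := by
          rw [mul_assoc, ← pow_add]
          simp only [Multiset.insert_eq_cons, Multiset.count_cons, Multiset.count_singleton]
          ring

end State

theorem AgreeOff.card_inversions_le {D : Finset (Fin n)} {a₀ a : Fin n → ℝ}
    (ha₀ : StrictMono a₀) (h : AgreeOff D a₀ a) :
    #{p : Fin n × Fin n | p.1 < p.2 ∧ a p.2 < a p.1} ≤ #D * #D := by
  rw [← card_product]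
  refine card_le_card fun p hp => ?_
  rw [mem_filter] at hp
  rw [mem_product]
  by_contra hpD
  have := (h p.2 p.1 (by tauto)).mpr hp.2.2
  exact (ha₀.lt_iff_lt.mp this).not_gt hp.2.1

variable (T : CompTree n)
  (hT : ∀ a : Fin n → ℝ, Injective a → ∀ i : Fin n, a (T.run a).1 ≤ a i)
include hT

/-- Otherwise pushing `z` below all other values would not change the output, which would then
not be the minimum. -/
theorem eq_run_fst_of_mem {C : Finset (Fin n)} {a : Fin n → ℝ} (ha : Injective a)
    (hC : BelowCompl C a) (hrun : ∀ b, AgreeOff C a b → T.run b = T.run a) {z : Fin n}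
    (hz : z ∈ C) : z = (T.run a).1 := by
  by_contra hne
  have : Nonempty (Fin n) := ⟨z⟩
  obtain ⟨x₀, hx₀⟩ := Finite.exists_min a
  set t := a x₀ - 1
  have hlow : ∀ y, t < a y := fun y => by linarith [hx₀ y]
  have hmin := hT (update a z t) (injective_update_of_ne ha fun x _ => (hlow x).ne') z
  rw [hrun _ (agreeOff_update hC hz fun y _ => hlow y), update_self,
    update_of_ne (Ne.symm hne)] at hmin
  exact (hlow _).not_ge hmin

theorem exists_clog_card_le_count {D : Finset (Fin n)} {a₀ : Fin n → ℝ} (ha₀ : Injective a₀)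
    (hD : BelowCompl D a₀) :
    ∃ a, Injective a ∧ AgreeOff D a₀ a ∧ Nat.clog 2 #D ≤ (T.run a).2.count (T.run a).1 := by
  obtain ⟨t, ht⟩ := State.exists_resolves T (s := ⟨D, fun _ => 1, a₀⟩) ⟨ha₀, hD⟩
  refine ⟨t.val, ht.valid.injective, ht.reaches.agreeOff, ?_⟩
  rw [Nat.clog_le_iff_le_pow one_lt_two]
  have hsum : ∑ x ∈ t.cand, t.wt x = #D :=
    ht.reaches.sum_wt.trans (card_eq_sum_ones D).symm
  have hcand : ∀ z ∈ t.cand, z = (T.run t.val).1 := fun z hz =>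
    eq_run_fst_of_mem T hT ht.valid.injective ht.valid.belowCompl ht.run_eq hz
  rcases t.cand.eq_empty_or_nonempty with hempty | ⟨z, hz⟩
  · simp [← hsum, hempty]
  have hw : (T.run t.val).1 ∈ t.cand := hcand z hz ▸ hz
  calc #D = t.wt (T.run t.val).1 := by
        rw [← hsum, eq_singleton_iff_unique_mem.mpr ⟨hw, hcand⟩, sum_singleton]
    _ ≤ 1 * 2 ^ _ := ht.wt_le _ hw
    _ = _ := one_mul _

end MinAdversary

end CompTree

open CompTree CompTree.MinAdversary

theorem minimum_fragile_lower_bound_inversions_general (n : ℕ)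
    (T : CompTree n)
    (hcorrect : ∀ a : Fin n → ℝ, Function.Injective a →
      ∀ i : Fin n, a (T.run a).1 ≤ a i) :
    (∃ a : Fin n → ℝ, Function.Injective a ∧
        Nat.clog 2 n ≤ (T.run a).2.count (T.run a).1) ∧
    ∀ k : ℕ, 1 ≤ Nat.sqrt k → Nat.sqrt k ≤ n →
      ∃ a : Fin n → ℝ, Function.Injective a ∧
        (Finset.univ.filter
          (fun p : Fin n × Fin n => p.1 < p.2 ∧ a p.2 < a p.1)).card ≤ k ∧
        Real.logb 2 (Nat.sqrt k) ≤ ((T.run a).2.count (T.run a).1 : ℝ) := by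
  have hsorted : StrictMono fun x : Fin n => (x : ℝ) := Nat.strictMono_cast.comp Fin.val_strictMono
  constructor
  · obtain ⟨a, ha, -, hcount⟩ := exists_clog_card_le_count T hcorrect (D := univ) hsorted.injective
      fun _ _ y hy => absurd (mem_univ y) hy
    exact ⟨a, ha, by simpa using hcount⟩
  · intro k _ hk
    obtain ⟨a, ha, hagree, hcount⟩ := exists_clog_card_le_count T hcorrect
      (D := {x : Fin n | x < Nat.sqrt k}) hsorted.injective fun x hx y hy => by
        simp only [mem_filter, mem_univ, true_and] at hx hy
        exact hsorted (Fin.lt_def.mpr (by omega))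
    have hcard : #{x : Fin n | x < Nat.sqrt k} = Nat.sqrt k := by
      rw [Fin.card_filter_val_lt, min_eq_right hk]
    refine ⟨a, ha, ?_, ?_⟩
    · calc _ ≤ Nat.sqrt k * Nat.sqrt k := hcard ▸ hagree.card_inversions_le hsorted
        _ ≤ k := Nat.sqrt_le k
    · rw [hcard] at hcount
      calc Real.logb 2 (Nat.sqrt k) ≤ Nat.clog 2 (Nat.sqrt k) := by
            exact_mod_cast Real.logb_natCast_le_clog 2 (Nat.sqrt k)
        _ ≤ _ := by exact_mod_cast hcount

/-- For any correct comparison-based minimum-finding algorithm on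
`n` distinct elements, there is an input forcing the returned minimum element to
participate in at least `⌈log₂ n⌉` comparisons.  Consequently, for any `k`
(with `⌊√k⌋ ≤ n`), there is an input consisting of `⌊√k⌋` elements followed by
larger sorted elements — having at most `k` inversions — on which the fragile
complexity of the minimum is at least `log₂ ⌊√k⌋ = Ω(log k)`. -/
theorem minimum_fragile_lower_bound_inversions (n : ℕ) (hn : 1 ≤ n)
    (T : CompTree n)
    (hcorrect : ∀ a : Fin n → ℝ, Function.Injective a →
      ∀ i : Fin n, a (T.run a).1 ≤ a i) :
    (∃ a : Fin n → ℝ, Function.Injective a ∧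
        Nat.clog 2 n ≤ (T.run a).2.count (T.run a).1) ∧
    ∀ k : ℕ, 1 ≤ Nat.sqrt k → Nat.sqrt k ≤ n →
      ∃ a : Fin n → ℝ, Function.Injective a ∧
        (Finset.univ.filter
          (fun p : Fin n × Fin n => p.1 < p.2 ∧ a p.2 < a p.1)).card ≤ k ∧
        Real.logb 2 (Nat.sqrt k) ≤ ((T.run a).2.count (T.run a).1 : ℝ) :=
  minimum_fragile_lower_bound_inversions_general n T hcorrect
end

section
/- Consider $k$ sorted lists $R_1, \ldots, R_k$ (ordered so that designated 'partitioning elements' $x_{R_1} \leq \cdots \leq x_{R_k}$), where in each $R_i$ the partitioning element $x_{R_i}$ has at least $|R_i|/7$ elements of $R_i$ below it and at least $5|R_i|/7$ elements of $R_i$ above it. Let $N = \sum_i |R_i|$ and let $t$ be the largest index with $\sum_{i=1}^{t-1} |R_i| < N/8$. Then $x_{R_t}$ is smaller than at least $5N/8$ of the $N$ elements, and at least $N/56$ of the $N$ elements are smaller than $x_{R_t}$. -/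
/-!
By maximality of `t`, the runs `M i` with `i ≤ t` hold at least `N/8` elements, and by the
choice of `t` the runs with `i ≥ t` hold more than `7N/8`. Monotonicity of the pivots puts the
top `5/7` of every run `M i` with `i ≥ t` above `x t`, and the bottom `1/7` of every run with
`i ≤ t` below it.
-/

open Finset

namespace Finset

variable {ι M : Type*}

theorem card_filter_lt_antitone {α : Type*} [LinearOrder α] (s : Finset α) :
    Antitone fun a : α ↦ #{x ∈ s | a < x} :=
  fun _ _ hab ↦ card_le_card <| monotone_filter_right s fun _ _ ↦ hab.trans_lt

theorem card_filter_gt_monotone {α : Type*} [LinearOrder α] (s : Finset α) :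
    Monotone fun a : α ↦ #{x ∈ s | x < a} :=
  fun _ _ hab ↦ card_le_card <| monotone_filter_right s fun _ _ hxa ↦ hxa.trans_le hab

theorem mul_sum_le_sum_of_le_of_nonneg [Fintype ι] [Semiring M] [PartialOrder M]
    [IsOrderedAddMonoid M] {s : Finset ι} {c : M} {f g : ι → M}
    (hle : ∀ i ∈ s, c * f i ≤ g i) (hg : ∀ i, 0 ≤ g i) :
    c * ∑ i ∈ s, f i ≤ ∑ i, g i :=
  calc c * ∑ i ∈ s, f i = ∑ i ∈ s, c * f i := mul_sum s f c
    _ ≤ ∑ i ∈ s, g i := sum_le_sum hle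
    _ ≤ ∑ i, g i := sum_le_sum_of_subset_of_nonneg (subset_univ s) fun i _ _ ↦ hg i

variable [LinearOrder ι] [Fintype ι]

theorem sum_Iio_add_sum_Ici [LocallyFiniteOrderBot ι] [LocallyFiniteOrderTop ι]
    [AddCommMonoid M] (f : ι → M) (t : ι) :
    ∑ i ∈ Iio t, f i + ∑ i ∈ Ici t, f i = ∑ i, f i := by
  rw [← sum_filter_add_sum_filter_not univ (· < t) f]
  congr 2 <;> ext <;> simp

theorem le_sum_Iic_of_forall_lt_le_sum_Iio [SuccOrder ι] [LocallyFiniteOrderBot ι]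
    [AddCommMonoid M] [Preorder M] {f : ι → M} {c : M} {t : ι}
    (hc : c ≤ ∑ i, f i) (h : ∀ t', t < t' → c ≤ ∑ i ∈ Iio t', f i) :
    c ≤ ∑ i ∈ Iic t, f i := by
  by_cases ht : IsMax t
  · rwa [show Iic t = univ from eq_univ_of_forall fun i ↦ mem_Iic.2 (ht.isTop i)]
  · rw [← Iio_succ_eq_Iic_of_not_isMax ht]
    exact h _ (Order.lt_succ_of_not_isMax ht)

end Finset

theorem pivot_counting_lemma_general (k : ℕ)
    (R : Fin k → Finset ℝ)
    (x : Fin k → ℝ) (hmono : Monotone x)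
    (hbelow : ∀ i, ((R i).card : ℝ) / 7 ≤ ((R i).filter (· < x i)).card)
    (habove : ∀ i, 5 * ((R i).card : ℝ) / 7 ≤ ((R i).filter (x i < ·)).card)
    (N : ℕ) (hN : N = ∑ i : Fin k, (R i).card)
    (t : Fin k)
    (ht : (∑ i ∈ Finset.Iio t, ((R i).card : ℝ)) < N / 8)
    (htmax : ∀ t' : Fin k, t < t' →
      ¬ (∑ i ∈ Finset.Iio t', ((R i).card : ℝ)) < N / 8) :
    5 * (N : ℝ) / 8 ≤ ∑ i : Fin k, (((R i).filter (x t < ·)).card : ℝ) ∧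
    (N : ℝ) / 56 ≤ ∑ i : Fin k, (((R i).filter (· < x t)).card : ℝ) := by
  have hNsum : (N : ℝ) = ∑ i, ((R i).card : ℝ) := by rw [hN]; push_cast; rfl
  have hsplit := sum_Iio_add_sum_Ici (fun i ↦ ((R i).card : ℝ)) t
  have hhead : (N : ℝ) / 8 ≤ ∑ i ∈ Iic t, ((R i).card : ℝ) :=
    le_sum_Iic_of_forall_lt_le_sum_Iio (by rw [← hNsum]; linarith [N.cast_nonneg (α := ℝ)])
      fun t' htt' ↦ not_lt.1 (htmax t' htt')
  have hcount_above : 5 / 7 * ∑ i ∈ Ici t, ((R i).card : ℝ)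
      ≤ ∑ i, (((R i).filter (x t < ·)).card : ℝ) := by
    refine mul_sum_le_sum_of_le_of_nonneg (fun i hi ↦ ?_) fun _ ↦ Nat.cast_nonneg _
    have hanti : #{y ∈ R i | x i < y} ≤ #{y ∈ R i | x t < y} :=
      card_filter_lt_antitone (R i) (hmono (mem_Ici.1 hi))
    linarith [habove i, (Nat.cast_le (α := ℝ)).2 hanti]
  have hcount_below : 1 / 7 * ∑ i ∈ Iic t, ((R i).card : ℝ)
      ≤ ∑ i, (((R i).filter (· < x t)).card : ℝ) := by
    refine mul_sum_le_sum_of_le_of_nonneg (fun i hi ↦ ?_) fun _ ↦ Nat.cast_nonneg _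
    have hmon : #{y ∈ R i | y < x i} ≤ #{y ∈ R i | y < x t} :=
      card_filter_gt_monotone (R i) (hmono (mem_Iic.1 hi))
    linarith [hbelow i, (Nat.cast_le (α := ℝ)).2 hmon]
  constructor <;> linarith

/-- Consider `k` pairwise-disjoint sorted lists `R 0, …, R (k-1)`
with partitioning elements `x 0 ≤ ⋯ ≤ x (k-1)`, where each `x i ∈ R i` has at
least `|R i|/7` elements of `R i` below it and at least `5|R i|/7` above it.
Let `N = ∑ |R i|` and let `t` be the largest index with
`∑_{i<t} |R i| < N/8`.  Then `x t` is smaller than at least `5N/8` of the `N`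
elements, and at least `N/56` of the `N` elements are smaller than `x t`. -/
theorem pivot_counting_lemma (k : ℕ) (hk : 1 ≤ k)
    (R : Fin k → Finset ℝ)
    (hdisj : ∀ i j, i ≠ j → Disjoint (R i) (R j))
    (x : Fin k → ℝ) (hx : ∀ i, x i ∈ R i) (hmono : Monotone x)
    (hbelow : ∀ i, ((R i).card : ℝ) / 7 ≤ ((R i).filter (· < x i)).card)
    (habove : ∀ i, 5 * ((R i).card : ℝ) / 7 ≤ ((R i).filter (x i < ·)).card)
    (N : ℕ) (hN : N = ∑ i : Fin k, (R i).card)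
    (t : Fin k)
    (ht : (∑ i ∈ Finset.Iio t, ((R i).card : ℝ)) < N / 8)
    (htmax : ∀ t' : Fin k, t < t' →
      ¬ (∑ i ∈ Finset.Iio t', ((R i).card : ℝ)) < N / 8) :
    5 * (N : ℝ) / 8 ≤ ∑ i : Fin k, (((R i).filter (x t < ·)).card : ℝ) ∧
    (N : ℝ) / 56 ≤ ∑ i : Fin k, (((R i).filter (· < x t)).card : ℝ) :=
  pivot_counting_lemma_general k R x hmono hbelow habove N hN t ht htmax
end
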